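/- (TransRL with uniform teacher equals SAC, Q-function form.) Suppose π_TC s is the uniform PMF on A for every s, and let n = |A|. Define the soft (SAC) Bellman operator of a full-support policy π by (T^H_π Q)(s,a) = r s a + γ · Σ_{s'} (p s a s') · Σ_{a'} (π s' a') · (Q(s',a') − α · log(π s' a')). Then for every full-support policy π, the unique fixed point Q^π of the augmented Bellman operator T_π and the unique fixed point Q^{π,H} of T^H_π satisfy Q^π(s,a) = Q^{π,H}(s,a) − γ · α · log n / (1 − γ) for all (s,a). -/

import Mathlib

open scoped BigOperators

variable {S A : Type*}

/-- A policy has full support if it assigns positive probability to every action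
in every state. -/
def FullSupport (π : S → PMF A) : Prop :=
  ∀ s a, 0 < ((π s) a).toReal

/-- The augmented Bellman operator of TransRL:
`(T_π Q)(s,a) = r s a + γ · Σ_{s'} p(s'|s,a) · Σ_{a'} π(a'|s') ·
  (Q(s',a') + α · log(π_TC(a'|s') / π(a'|s')))`,
where terms with `π(a'|s') = 0` contribute `0`. -/
noncomputable def augBellman [Fintype S] [Fintype A]
    (p : S → A → PMF S) (r : S → A → ℝ) (γ α : ℝ) (πTC : S → PMF A)
    (π : S → PMF A) (Q : S → A → ℝ) : S → A → ℝ :=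
  fun s a => r s a + γ * ∑ s' : S, ((p s a) s').toReal *
    ∑ a' : A, ((π s') a').toReal *
      (Q s' a' + α * Real.log (((πTC s') a').toReal / ((π s') a').toReal))

/-- The per-state policy improvement objective
`J_Q(π, s) = Σ_a π(a|s) · (log π(a|s) − log π_TC(a|s) − Q(s,a)/α)`,
with terms where `π(a|s) = 0` contributing `0`. -/
noncomputable def impObj [Fintype A] (πTC : S → PMF A) (α : ℝ)
    (Q : S → A → ℝ) (π : S → PMF A) (s : S) : ℝ :=
  ∑ a : A, ((π s) a).toReal *
    (Real.log ((π s) a).toReal - Real.log (((πTC s) a).toReal) - Q s a / α)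

/-- The auxiliary state value
`V(s) = Σ_a π(a|s) · (Q(s,a) + α · log(π_TC(a|s)/π(a|s)))`. -/
noncomputable def auxValue [Fintype A] (πTC : S → PMF A) (α : ℝ)
    (Q : S → A → ℝ) (π : S → PMF A) (s : S) : ℝ :=
  ∑ a : A, ((π s) a).toReal *
    (Q s a + α * Real.log (((πTC s) a).toReal / ((π s) a).toReal))

/-- The soft (SAC) Bellman operator:
`(T^H_π Q)(s,a) = r s a + γ · Σ_{s'} p(s'|s,a) · Σ_{a'} π(a'|s') ·
  (Q(s',a') − α · log π(a'|s'))`. -/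
noncomputable def softBellman [Fintype S] [Fintype A]
    (p : S → A → PMF S) (r : S → A → ℝ) (γ α : ℝ)
    (π : S → PMF A) (Q : S → A → ℝ) : S → A → ℝ :=
  fun s a => r s a + γ * ∑ s' : S, ((p s a) s').toReal *
    ∑ a' : A, ((π s') a').toReal * (Q s' a' - α * Real.log (((π s') a').toReal))

/-!
With a uniform teacher, `log (π_TC / π) = -log π - log n`, so `T_π Q = T^H_π Q - γ α log n`.
Lowering `Q` by a constant `c` lowers `T^H_π Q` by `γ c`, hence `Q^{π,H} - c` is a fixed point of
`T_π` as soon as `c = γ (c + α log n)`. Since `T_π` is a `γ`-contraction for the sup norm, its fixed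
point is unique, so `Q^π = Q^{π,H} - γ α log n / (1 - γ)`.
-/

namespace PMF

variable {B : Type*} [Fintype B]

theorem sum_toReal_eq_one (q : PMF B) : ∑ b, (q b).toReal = 1 := by
  rw [← ENNReal.toReal_sum fun b _ => q.apply_ne_top b,
    ← tsum_fintype (L := SummationFilter.unconditional _), q.tsum_coe, ENNReal.toReal_one]

theorem sum_toReal_mul_sub_const (q : PMF B) (f : B → ℝ) (c : ℝ) :
    ∑ b, (q b).toReal * (f b - c) = ∑ b, (q b).toReal * f b - c := by
  simp only [mul_sub, Finset.sum_sub_distrib, ← Finset.sum_mul, sum_toReal_eq_one, one_mul]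

theorem abs_sum_toReal_mul_le (q : PMF B) {f : B → ℝ} {M : ℝ} (hf : ∀ b, |f b| ≤ M) :
    |∑ b, (q b).toReal * f b| ≤ M :=
  calc |∑ b, (q b).toReal * f b|
      ≤ ∑ b, |(q b).toReal * f b| := Finset.abs_sum_le_sum_abs _ _
    _ ≤ ∑ b, (q b).toReal * M := by
        gcongr with b
        rw [abs_mul, abs_of_nonneg ENNReal.toReal_nonneg]
        exact mul_le_mul_of_nonneg_left (hf b) ENNReal.toReal_nonneg
    _ = M := by rw [← Finset.sum_mul, sum_toReal_eq_one, one_mul]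

end PMF

section Bellman

variable [Fintype S] [Fintype A] (p : S → A → PMF S) (r : S → A → ℝ) {γ : ℝ} (α : ℝ)

theorem augBellman_eq_softBellman_sub_of_uniform (πTC : S → PMF A)
    (hTCu : ∀ s a, ((πTC s) a).toReal = 1 / (Fintype.card A : ℝ))
    {π : S → PMF A} (hπ : FullSupport π) (Q : S → A → ℝ) (s : S) (a : A) :
    augBellman p r γ α πTC π Q s a =
      softBellman p r γ α π Q s a - γ * (α * Real.log (Fintype.card A)) := by
  have hterm : ∀ s' a', Q s' a' + α * Real.log (((πTC s') a').toReal / ((π s') a').toReal) =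
      Q s' a' - α * Real.log ((π s') a').toReal - α * Real.log (Fintype.card A) := fun s' a' => by
    have : Nonempty A := ⟨a'⟩
    rw [hTCu, Real.log_div (by positivity) (hπ s' a').ne', one_div, Real.log_inv]
    ring
  simp only [augBellman, softBellman, hterm, PMF.sum_toReal_mul_sub_const]
  ring

theorem softBellman_sub_const (π : S → PMF A) (Q : S → A → ℝ) (c : ℝ) (s : S) (a : A) :
    softBellman p r γ α π (fun s a => Q s a - c) s a = softBellman p r γ α π Q s a - γ * c := by
  simp only [softBellman, sub_right_comm _ c, PMF.sum_toReal_mul_sub_const]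
  ring

theorem augBellman_sub_augBellman (πTC π : S → PMF A) (Q Q' : S → A → ℝ) (s : S) (a : A) :
    augBellman p r γ α πTC π Q s a - augBellman p r γ α πTC π Q' s a =
      γ * ∑ s', ((p s a) s').toReal * ∑ a', ((π s') a').toReal * (Q s' a' - Q' s' a') := by
  simp only [augBellman, add_sub_add_left_eq_sub, ← mul_sub, ← Finset.sum_sub_distrib,
    add_sub_add_right_eq_sub]

theorem dist_augBellman_le (hγ0 : 0 ≤ γ) (πTC π : S → PMF A) (Q Q' : S → A → ℝ) :
    dist (augBellman p r γ α πTC π Q) (augBellman p r γ α πTC π Q') ≤ γ * dist Q Q' := by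
  have hQ : ∀ s' a', |Q s' a' - Q' s' a'| ≤ dist Q Q' := fun s' a' =>
    (Real.dist_eq _ _).symm.trans_le
      ((dist_le_pi_dist (Q s') (Q' s') a').trans (dist_le_pi_dist Q Q' s'))
  refine (dist_pi_le_iff (by positivity)).2 fun s => (dist_pi_le_iff (by positivity)).2 fun a => ?_
  rw [Real.dist_eq, augBellman_sub_augBellman, abs_mul, abs_of_nonneg hγ0]
  gcongr
  exact PMF.abs_sum_toReal_mul_le _ fun s' => PMF.abs_sum_toReal_mul_le _ (hQ s')

theorem augBellman_contractingWith (hγ0 : 0 ≤ γ) (hγ1 : γ < 1) (πTC π : S → PMF A) :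
    ContractingWith ⟨γ, hγ0⟩ (augBellman p r γ α πTC π) :=
  ⟨hγ1, LipschitzWith.of_dist_le_mul (dist_augBellman_le p r α hγ0 πTC π)⟩

end Bellman

theorem uniform_teacher_Q_eq_sac_Q_general [Fintype S] [Fintype A]
    (p : S → A → PMF S) (r : S → A → ℝ) (γ α : ℝ)
    (hγ0 : 0 ≤ γ) (hγ1 : γ < 1)
    (πTC : S → PMF A)
    (hTCu : ∀ s a, ((πTC s) a).toReal = 1 / (Fintype.card A : ℝ))
    (π : S → PMF A) (hπ : FullSupport π)
    (Qaug : S → A → ℝ) (hfixAug : augBellman p r γ α πTC π Qaug = Qaug)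
    (Qsoft : S → A → ℝ) (hfixSoft : softBellman p r γ α π Qsoft = Qsoft) :
    ∀ s a, Qaug s a =
      Qsoft s a - γ * α * Real.log (Fintype.card A : ℝ) / (1 - γ) := by
  set c := γ * α * Real.log (Fintype.card A : ℝ) / (1 - γ) with hc_def
  have hc : c = γ * c + γ * (α * Real.log (Fintype.card A)) := by
    have : 1 - γ ≠ 0 := by linarith
    rw [hc_def]
    field_simp
    ring
  have hshift : Function.IsFixedPt (augBellman p r γ α πTC π) (fun s a => Qsoft s a - c) := by
    funext s a
    rw [augBellman_eq_softBellman_sub_of_uniform p r α πTC hTCu hπ, softBellman_sub_const,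
      hfixSoft]
    linarith
  have hQ := (augBellman_contractingWith p r α hγ0 hγ1 πTC π).fixedPoint_unique' hfixAug hshift
  exact fun s a => congrFun (congrFun hQ s) a

theorem uniform_teacher_Q_eq_sac_Q [Fintype S] [Fintype A] [Nonempty S] [Nonempty A]
    (p : S → A → PMF S) (r : S → A → ℝ) (γ α : ℝ)
    (hγ0 : 0 ≤ γ) (hγ1 : γ < 1) (hα : 0 < α)
    (πTC : S → PMF A)
    (hTCu : ∀ s a, ((πTC s) a).toReal = 1 / (Fintype.card A : ℝ))
    (π : S → PMF A) (hπ : FullSupport π)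
    (Qaug : S → A → ℝ) (hfixAug : augBellman p r γ α πTC π Qaug = Qaug)
    (Qsoft : S → A → ℝ) (hfixSoft : softBellman p r γ α π Qsoft = Qsoft) :
    ∀ s a, Qaug s a =
      Qsoft s a - γ * α * Real.log (Fintype.card A : ℝ) / (1 - γ) :=
  uniform_teacher_Q_eq_sac_Q_general p r γ α hγ0 hγ1 πTC hTCu π hπ Qaug hfixAug Qsoft hfixSoft
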